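/- Let A be a finite alphabet. If Z is a group code over A and F is a uniformly recurrent tree set with alphabet A, then d_F(Z ∩ F) = d(Z). -/

import Mathlib

/-! Common definitions: words over a finite alphabet `A` are terms of `List A`,
concatenation being the monoid operation of the free monoid `A*`. -/

namespace PaperDefs

variable {A : Type*}

/-- `w` belongs to the Kleene star `X*` of `X`: it is a (possibly empty)
concatenation of elements of `X`. -/
def InStar (X : Set (List A)) (w : List A) : Prop :=
  ∃ l : List (List A), (∀ u ∈ l, u ∈ X) ∧ l.flatten = w

/-- The language `X*`. -/
def star (X : Set (List A)) : Set (List A) := {w | InStar X w}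

/-- A prefix code: a nonempty set of nonempty words, none of which is a proper
prefix of another. -/
def IsPrefixCode (X : Set (List A)) : Prop :=
  X.Nonempty ∧ (∀ w ∈ X, w ≠ []) ∧ ∀ u ∈ X, ∀ v ∈ X, u <+: v → u = v

/-- A suffix code. -/
def IsSuffixCode (X : Set (List A)) : Prop :=
  X.Nonempty ∧ (∀ w ∈ X, w ≠ []) ∧ ∀ u ∈ X, ∀ v ∈ X, u <:+ v → u = v

/-- A bifix code. -/
def IsBifixCode (X : Set (List A)) : Prop := IsPrefixCode X ∧ IsSuffixCode X

/-- A factorial set contains all factors of its elements. -/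
def Factorial (F : Set (List A)) : Prop := ∀ w ∈ F, ∀ u, u <:+: w → u ∈ F

/-- A recurrent set. -/
def Recurrent (F : Set (List A)) : Prop :=
  Factorial F ∧ F.Nonempty ∧ F ≠ {[]} ∧ ∀ u ∈ F, ∀ v ∈ F, ∃ w, u ++ w ++ v ∈ F

/-- A uniformly recurrent set. -/
def UniformlyRecurrent (F : Set (List A)) : Prop :=
  Recurrent F ∧ ∀ u ∈ F, ∃ n : ℕ, ∀ w ∈ F, n ≤ w.length → u <:+: w

/-- A parse of `w` with respect to `X` : a triple `(v, x, u)` with `w = v x u`,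
`v` has no suffix in `X`, `x ∈ X*`, and `u` has no prefix in `X`. -/
def IsParse (X : Set (List A)) (w : List A) (p : List A × List A × List A) : Prop :=
  p.1 ++ p.2.1 ++ p.2.2 = w ∧ (¬ ∃ s ∈ X, s <:+ p.1) ∧ InStar X p.2.1 ∧
    ¬ ∃ s ∈ X, s <+: p.2.2

/-- `δ_X(w)`, the number of parses of `w` with respect to `X`. -/
noncomputable def delta (X : Set (List A)) (w : List A) : ℕ :=
  {p | IsParse X w p}.ncard

/-- The `F`-degree `d_F(X)` of `X`, as an extended natural number. -/
noncomputable def Fdeg (X F : Set (List A)) : ℕ∞ :=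
  ⨆ w ∈ F, (delta X w : ℕ∞)

/-- The degree `d(X)` of `X`. -/
noncomputable def deg (X : Set (List A)) : ℕ∞ := Fdeg X Set.univ

/-- An `F`-maximal bifix code. -/
def IsFMaximalBifixCode (F X : Set (List A)) : Prop :=
  IsBifixCode X ∧ X ⊆ F ∧ ∀ Y : Set (List A), IsBifixCode Y → Y ⊆ F → X ⊆ Y → Y = X

/-- An `F`-maximal prefix code. -/
def IsFMaximalPrefixCode (F X : Set (List A)) : Prop :=
  IsPrefixCode X ∧ X ⊆ F ∧ ∀ Y : Set (List A), IsPrefixCode Y → Y ⊆ F → X ⊆ Y → Y = X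

/-- `X` is `F`-thin: some word of `F` is not a factor of any element of `X`. -/
def FThin (F X : Set (List A)) : Prop := ∃ w ∈ F, ∀ x ∈ X, ¬ w <:+: x

/-- A rational (regular) language. -/
def IsRational (L : Set (List A)) : Prop :=
  ∃ (σ : Type) (_ : Fintype σ) (M : DFA A σ), ∀ w : List A, w ∈ M.accepts ↔ w ∈ L

/-- The syntactic congruence of the language `L`. -/
def SynEquiv (L : Set (List A)) (u v : List A) : Prop :=
  ∀ x y : List A, x ++ u ++ y ∈ L ↔ x ++ v ++ y ∈ L

/-- `η : A* → M` is (a realization of) the syntactic homomorphism onto the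
syntactic monoid of `L`. -/
structure IsSyntacticHom (L : Set (List A)) {M : Type*} [Monoid M] (η : List A → M) : Prop where
  map_nil : η [] = 1
  map_append : ∀ u v : List A, η (u ++ v) = η u * η v
  surj : Function.Surjective η
  syn : ∀ u v : List A, η u = η v ↔ SynEquiv L u v

section Green

variable {M : Type*} [Monoid M]

/-- The `J`-order: `MuM ⊆ MvM`. -/
def JLe (u v : M) : Prop := ∃ x y, u = x * v * y

/-- Green's relation `J`. -/
def JEquiv (u v : M) : Prop := JLe u v ∧ JLe v u

/-- Green's relation `R`. -/
def REquiv (u v : M) : Prop := (∃ x, v = u * x) ∧ (∃ x, u = v * x)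

/-- Green's relation `L`. -/
def LEquiv (u v : M) : Prop := (∃ x, v = x * u) ∧ (∃ x, u = x * v)

/-- Green's relation `H`. -/
def HEquiv (u v : M) : Prop := REquiv u v ∧ LEquiv u v

/-- Green's relation `D`. -/
def DEquiv (u v : M) : Prop := ∃ s, REquiv u s ∧ LEquiv s v

/-- The `H`-class of an element. -/
def HClass (e : M) : Set M := {m | HEquiv m e}

/-- Membership in the minimum ideal (minimum `J`-class) of `M`. -/
def InMinIdeal (m : M) : Prop := ∀ n : M, JLe m n

/-- `S` is a subgroup of the monoid `M`: a subsemigroup which is a group. -/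
def IsSubgroupIn (S : Set M) : Prop :=
  S.Nonempty ∧ (∀ x ∈ S, ∀ y ∈ S, x * y ∈ S) ∧
    ∃ e ∈ S, (∀ x ∈ S, e * x = x ∧ x * e = x) ∧ ∀ x ∈ S, ∃ y ∈ S, x * y = e ∧ y * x = e

/-- The subsets `S ⊆ M` and `T ⊆ N` (each closed under multiplication, e.g.
maximal subgroups) are isomorphic as groups: there is a multiplicative
bijection from `S` onto `T`. -/
def GroupIsoOn {N : Type*} [Monoid N] (S : Set M) (T : Set N) : Prop :=
  ∃ φ : M → N, Set.BijOn φ S T ∧ ∀ x ∈ S, ∀ y ∈ S, φ (x * y) = φ x * φ y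

end Green

/-- `m` belongs to `J_F(X)`, the minimum `J`-class of the syntactic monoid of
`X*` meeting the image of `F` under the syntactic homomorphism `η`. -/
def InFMinJ {M : Type*} [Monoid M] (η : List A → M) (F : Set (List A)) (m : M) : Prop :=
  (∃ w ∈ F, JEquiv m (η w)) ∧ ∀ w ∈ F, JLe m (η w)

/-- A group code: a prefix code `Z` defined by a transitive permutation
representation of `A*` on a finite set, `Z*` being the stabilizer of a point. -/
def IsGroupCode (Z : Set (List A)) : Prop :=
  IsPrefixCode Z ∧
  ∃ (Q : Type) (_ : Fintype Q) (q₀ : Q) (α : List A → Equiv.Perm Q),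
    α [] = 1 ∧ (∀ u v : List A, α (u ++ v) = α u * α v) ∧
    (∀ q q' : Q, ∃ w : List A, α w q = q') ∧
    (∀ w : List A, InStar Z w ↔ α w q₀ = q₀) ∧
    Z = {w : List A | α w q₀ = q₀ ∧ w ≠ [] ∧
          ¬ ∃ u v : List A, u ≠ [] ∧ v ≠ [] ∧ α u q₀ = q₀ ∧ α v q₀ = q₀ ∧ w = u ++ v}

/-- Vertices of the extension graph of `w` in `F`: the disjoint union of
`L(w)` and `R(w)`. -/
def ExtVertex (F : Set (List A)) (w : List A) : Sum A A → Prop :=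
  fun x => Sum.elim (fun a => a :: w ∈ F) (fun b => w ++ [b] ∈ F) x

/-- The edge relation of the extension graph of `w` in `F`. -/
def ExtRel (F : Set (List A)) (w : List A) : Sum A A → Sum A A → Prop :=
  fun x y =>
    match x, y with
    | Sum.inl a, Sum.inr b => a :: (w ++ [b]) ∈ F
    | _, _ => False

/-- The extension graph `G(w)` of `w` in `F`. -/
def extGraph (F : Set (List A)) (w : List A) :
    SimpleGraph {x : Sum A A // ExtVertex F w x} :=
  SimpleGraph.fromRel fun x y => ExtRel F w x.1 y.1

/-- `F` is connected: every extension graph of a word of `F` is connected. -/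
def ConnectedSet (F : Set (List A)) : Prop :=
  ∀ w ∈ F, (extGraph F w).Connected

/-- `F` is a tree set: every extension graph of a word of `F` is a tree. -/
def TreeSet (F : Set (List A)) : Prop :=
  ∀ w ∈ F, (extGraph F w).IsTree

/-- The alphabet of `F` is the whole of `A`. -/
def AlphabetIs (F : Set (List A)) : Prop := ∀ a : A, [a] ∈ F

/-- The left quotient `u⁻¹L`, i.e. the state reached from the initial state of
the minimal automaton of `L` by reading `u`. -/
def leftQuot (L : Set (List A)) (u : List A) : Set (List A) := {w | u ++ w ∈ L}

/-- The set of states of the minimal automaton of `L`: the nonempty left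
quotients of `L`. -/
def MinStates (L : Set (List A)) : Set (Set (List A)) :=
  {q | q.Nonempty ∧ ∃ u : List A, q = leftQuot L u}

/-- The (partial) transition of the minimal automaton: `q · v`; it is defined
when the resulting set is nonempty. -/
def stepW (q : Set (List A)) (v : List A) : Set (List A) := {w | v ++ w ∈ q}

/-- The rank of the word `v` in the minimal automaton of `L`: the number of
distinct states `q · v` with `q` a state such that `q · v` is defined. -/
noncomputable def wordRank (L : Set (List A)) (v : List A) : ℕ :=
  ((fun q => stepW q v) '' {q ∈ MinStates L | (stepW q v).Nonempty}).ncard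

/-- The set of first return words of `F` to `u`. -/
def ReturnWords (F : Set (List A)) (u : List A) : Set (List A) :=
  {v | v ≠ [] ∧ u ++ v ∈ F ∧ u <:+ u ++ v ∧
    ¬ ∃ x y : List A, x ≠ [] ∧ y ≠ [] ∧ u ++ v = x ++ u ++ y}

/-- A code: every word has at most one factorization into elements of `X`. -/
def IsCode (X : Set (List A)) : Prop :=
  ∀ l m : List (List A), (∀ u ∈ l, u ∈ X) → (∀ u ∈ m, u ∈ X) →
    l.flatten = m.flatten → l = m

/-- The set `I = Q_X · K` of images of states of the minimal automaton of `L`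
under (partial) transitions by words whose syntactic image lies in `K`. -/
def ImageSet (L : Set (List A)) {M : Type*} [Monoid M] (η : List A → M) (K : Set M) :
    Set (Set (List A)) :=
  {p | ∃ q ∈ MinStates L, ∃ v : List A, η v ∈ K ∧ (stepW q v).Nonempty ∧ p = stepW q v}

/-- A witness for "a finite monoid `M` together with a monoid homomorphism
`A* → M`". -/
structure FiniteMonoidHomWitness (A : Type*) where
  M : Type
  [fin : Fintype M]
  [mon : Monoid M]
  φ : List A → M
  map_nil : φ [] = 1
  map_append : ∀ u v : List A, φ (u ++ v) = φ u * φ v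

end PaperDefs

/-!
For a prefix code `X`, a parse of `w` is determined by its first component, which can be any
prefix of `w` without suffix in `X`. When `Z` is the group code of a transitive action `α` of `A*`
on `Q` stabilizing `q₀`, these prefixes are the first visits of the run of `w` from `q₀`, so
`δ_Z(w)` is the number of states visited by this run. Since `F` is factorial, `δ_{Z ∩ F} = δ_Z`
on `F`. Both degrees are therefore at most `|Q|`, with equality as soon as the run of some word of
`F` visits every state.

Such a word is built one state at a time, once every `w ∈ F` has right extensions `w y ∈ F` with
`α y q₀` arbitrary. Consider the skew product of the Rauzy graph of `F` of level `n` with `Q`;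
connectedness of the extension graphs makes it strongly connected, by induction on `n`. By uniform
recurrence, every long word of `F` contains a word with the fewest reachable states `α y q₀`, so
all windows of some level have that minimal number of them; then the reachable states are
invariant along the skew product, hence they are all of `Q`.
-/

namespace PaperDefs

open List Relation

section Words

variable {A : Type*} {F X : Set (List A)} {u w : List A}

theorem Factorial.mem_of_infix (hF : Factorial F) (h : u <:+: w) (hw : w ∈ F) : u ∈ F :=
  hF w hw u h

theorem Factorial.mem_of_prefix (hF : Factorial F) (h : u <+: w) (hw : w ∈ F) : u ∈ F :=
  hF.mem_of_infix h.isInfix hw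

theorem Factorial.mem_of_suffix (hF : Factorial F) (h : u <:+ w) (hw : w ∈ F) : u ∈ F :=
  hF.mem_of_infix h.isInfix hw

theorem Factorial.nil_mem (hF : Factorial F) (hne : F.Nonempty) : [] ∈ F :=
  let ⟨_, hw⟩ := hne
  hF.mem_of_prefix nil_prefix hw

theorem Recurrent.exists_append_singleton_mem (hF : Recurrent F) (hw : w ∈ F) :
    ∃ b, w ++ [b] ∈ F := by
  obtain ⟨w₀, hw₀, hne⟩ : ∃ w₀ ∈ F, w₀ ≠ [] := by
    by_contra! h
    exact hF.2.2.1 (Set.eq_singleton_iff_unique_mem.2 ⟨hF.1.nil_mem hF.2.1, h⟩)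
  obtain ⟨t, ht⟩ := hF.2.2.2 w hw w₀ hw₀
  obtain ⟨b, s, hbs⟩ := exists_cons_of_ne_nil (append_ne_nil_of_right_ne_nil t hne)
  exact ⟨b, hF.1.mem_of_prefix ⟨s, by rw [append_assoc w t, hbs]; simp⟩ ht⟩

theorem Recurrent.exists_length_eq (hF : Recurrent F) (n : ℕ) :
    ∃ w ∈ F, w.length = n := by
  induction n with
  | zero => exact ⟨[], hF.1.nil_mem hF.2.1, rfl⟩
  | succ n ih =>
    obtain ⟨w, hw, rfl⟩ := ih
    obtain ⟨b, hb⟩ := hF.exists_append_singleton_mem hw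
    exact ⟨w ++ [b], hb, by simp⟩

theorem exists_flatten_append_eq (hX : ∀ x ∈ X, x ≠ []) (r : List A) :
    ∃ (l : List (List A)) (u : List A), (∀ x ∈ l, x ∈ X) ∧ l.flatten ++ u = r ∧
      ¬ ∃ s ∈ X, s <+: u := by
  induction h : r.length using Nat.strong_induction_on generalizing r with
  | _ n ih =>
    by_cases hr : ∃ x ∈ X, x <+: r
    · obtain ⟨x, hx, r', rfl⟩ := hr
      have hlt : r'.length < n := by
        have := length_pos_iff.2 (hX x hx)
        simp only [length_append] at h
        omega
      obtain ⟨l, u, hl, rfl, hu⟩ := ih _ hlt r' rfl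
      exact ⟨x :: l, u, forall_mem_cons.2 ⟨hx, hl⟩, by simp, hu⟩
    · exact ⟨[], r, by simp, by simp, hr⟩

theorem flatten_append_inj (hX : ∀ x ∈ X, ∀ y ∈ X, x <+: y → x = y)
    {l l' : List (List A)} {u u' : List A} (hl : ∀ x ∈ l, x ∈ X) (hl' : ∀ x ∈ l', x ∈ X)
    (hu : ¬ ∃ s ∈ X, s <+: u) (hu' : ¬ ∃ s ∈ X, s <+: u')
    (h : l.flatten ++ u = l'.flatten ++ u') : l = l' ∧ u = u' := by
  induction l generalizing l' with
  | nil =>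
    cases l' with
    | nil => simpa using h
    | cons x' l' =>
      exact (hu ⟨x', hl' x' mem_cons_self, l'.flatten ++ u', by simpa using h.symm⟩).elim
  | cons x l ih =>
    cases l' with
    | nil =>
      exact (hu' ⟨x, hl x mem_cons_self, l.flatten ++ u, by simpa using h⟩).elim
    | cons x' l' =>
      simp only [flatten_cons, append_assoc] at h
      have hx : x = x' := by
        have hxX := hl x mem_cons_self
        have hx'X := hl' x' mem_cons_self
        rcases prefix_or_prefix_of_prefix (prefix_append x _) (h ▸ prefix_append x' _)
          with hp | hp
        · exact hX x hxX x' hx'X hp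
        · exact (hX x' hx'X x hxX hp).symm
      subst hx
      obtain ⟨rfl, rfl⟩ := ih (fun y hy => hl y (mem_cons_of_mem _ hy))
        (fun y hy => hl' y (mem_cons_of_mem _ hy)) (append_cancel_left h)
      exact ⟨rfl, rfl⟩

theorem delta_eq_ncard (hX₀ : ∀ x ∈ X, x ≠ [])
    (hX : ∀ x ∈ X, ∀ y ∈ X, x <+: y → x = y) (w : List A) :
    delta X w = {v | v <+: w ∧ ¬ ∃ s ∈ X, s <:+ v}.ncard := by
  have hbij : Set.BijOn Prod.fst {p | IsParse X w p} {v | v <+: w ∧ ¬ ∃ s ∈ X, s <:+ v} := by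
    refine ⟨?_, ?_, ?_⟩
    · rintro ⟨v, x, u⟩ ⟨rfl, hv, -, -⟩
      exact ⟨⟨x ++ u, by rw [append_assoc]⟩, hv⟩
    · rintro ⟨v, -, u⟩ ⟨rfl, -, ⟨l, hl, rfl⟩, hu⟩ ⟨v', -, u'⟩ ⟨h, -, ⟨l', hl', rfl⟩, hu'⟩
        rfl
      simp only [append_assoc, append_cancel_left_eq] at h
      obtain ⟨rfl, rfl⟩ := flatten_append_inj hX hl hl' hu hu' h.symm
      rfl
    · rintro v ⟨⟨r, rfl⟩, hv⟩
      obtain ⟨l, u, hl, rfl, hu⟩ := exists_flatten_append_eq hX₀ r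
      exact ⟨(v, l.flatten, u), ⟨by rw [append_assoc], hv, ⟨l, hl, rfl⟩, hu⟩, rfl⟩
  rw [delta, ← hbij.image_eq, hbij.injOn.ncard_image]

theorem isParse_inter_iff (hF : Factorial F) (hw : w ∈ F) {p : List A × List A × List A} :
    IsParse (X ∩ F) w p ↔ IsParse X w p := by
  obtain ⟨v, x, u⟩ := p
  refine and_congr_right fun h => ?_
  subst h
  have hmem : ∀ s, s <:+: v ++ x ++ u → s ∈ F := fun s hs => hF.mem_of_infix hs hw
  have hv : ∀ s, s <:+ v → s ∈ F := fun s hs =>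
    hmem s (hs.isInfix.trans ⟨[], x ++ u, by simp⟩)
  have hu : ∀ s, s <+: u → s ∈ F := fun s hs =>
    hmem s (hs.isInfix.trans ⟨v ++ x, [], by simp⟩)
  have hx : ∀ l : List (List A), l.flatten = x → ∀ s ∈ l, s ∈ F := by
    rintro l rfl s hs
    exact hmem s ((infix_of_mem_flatten hs).trans ⟨v, u, rfl⟩)
  simp only [InStar, Set.mem_inter_iff]
  refine and_congr (not_congr ⟨?_, ?_⟩) (and_congr ⟨?_, ?_⟩ (not_congr ⟨?_, ?_⟩))
  · rintro ⟨s, ⟨hs, -⟩, hsv⟩; exact ⟨s, hs, hsv⟩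
  · rintro ⟨s, hs, hsv⟩; exact ⟨s, ⟨hs, hv s hsv⟩, hsv⟩
  · rintro ⟨l, hl, hlx⟩; exact ⟨l, fun s hs => (hl s hs).1, hlx⟩
  · rintro ⟨l, hl, hlx⟩; exact ⟨l, fun s hs => ⟨hl s hs, hx l hlx s hs⟩, hlx⟩
  · rintro ⟨s, ⟨hs, -⟩, hsu⟩; exact ⟨s, hs, hsu⟩
  · rintro ⟨s, hs, hsu⟩; exact ⟨s, ⟨hs, hu s hsu⟩, hsu⟩

theorem Fdeg_inter_self (hF : Factorial F) : Fdeg (X ∩ F) F = Fdeg X F := by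
  refine biSup_congr fun w hw => ?_
  simp only [delta, isParse_inter_iff hF hw]

theorem Fdeg_eq_of_forall_le {n : ℕ} (hle : ∀ w ∈ F, delta X w ≤ n)
    (hex : ∃ w ∈ F, delta X w = n) : Fdeg X F = n := by
  obtain ⟨w, hw, hwn⟩ := hex
  refine le_antisymm (iSup₂_le fun w hw => by exact_mod_cast hle w hw) ?_
  exact le_iSup₂_of_le w hw (by rw [hwn])

end Words

section Visited

variable {A Q : Type*} {Z : Set (List A)} {α : List A → Equiv.Perm Q} {q₀ : Q}

def visited (α : List A → Equiv.Perm Q) (q₀ : Q) (w : List A) : Set Q :=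
  (fun v => α v q₀) '' {v | v <+: w}

theorem map_nil_eq_one (hα : ∀ u v, α (u ++ v) = α u * α v) : α [] = 1 :=
  mul_eq_left.1 (by rw [← hα, nil_append])

theorem apply_append_eq_iff (hα : ∀ u v, α (u ++ v) = α u * α v) (v s : List A) :
    α (v ++ s) q₀ = α v q₀ ↔ α s q₀ = q₀ := by
  rw [hα, Equiv.Perm.mul_apply, (α v).injective.eq_iff]

theorem exists_mem_suffix_iff (hZ : ∀ z ∈ Z, z ≠ [])
    (hstar : ∀ w, InStar Z w ↔ α w q₀ = q₀)
    {v : List A} : (∃ s ∈ Z, s <:+ v) ↔ ∃ s, s ≠ [] ∧ s <:+ v ∧ α s q₀ = q₀ := by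
  constructor
  · rintro ⟨s, hs, hsv⟩
    exact ⟨s, hZ s hs, hsv, (hstar s).1 ⟨[s], by simpa using hs, by simp⟩⟩
  · rintro ⟨s, hs, hsv, hsq⟩
    obtain ⟨l, hl, rfl⟩ := (hstar s).2 hsq
    have hl₀ : l ≠ [] := by rintro rfl; exact hs rfl
    refine ⟨l.getLast hl₀, hl _ (getLast_mem hl₀), IsSuffix.trans ?_ hsv⟩
    conv_rhs => rw [← dropLast_append_getLast hl₀, flatten_append, flatten_singleton]
    exact suffix_append _ _

theorem not_exists_mem_suffix_iff (hZ : ∀ z ∈ Z, z ≠ [])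
    (hstar : ∀ w, InStar Z w ↔ α w q₀ = q₀) (hα : ∀ u v, α (u ++ v) = α u * α v)
    {v : List A} :
    (¬ ∃ s ∈ Z, s <:+ v) ↔ ∀ v', v' <+: v → v' ≠ v → α v' q₀ ≠ α v q₀ := by
  rw [exists_mem_suffix_iff hZ hstar]
  constructor
  · rintro h v' ⟨s, rfl⟩ hne heq
    exact h ⟨s, by rintro rfl; simp at hne, suffix_append _ _,
      (apply_append_eq_iff hα v' s).1 heq.symm⟩
  · rintro h ⟨s, hs, ⟨v', rfl⟩, hsq⟩
    exact h v' (prefix_append _ _) (by simpa using hs) ((apply_append_eq_iff hα v' s).2 hsq).symm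

theorem delta_eq_ncard_visited (hZ : IsPrefixCode Z)
    (hstar : ∀ w, InStar Z w ↔ α w q₀ = q₀) (hα : ∀ u v, α (u ++ v) = α u * α v)
    (w : List A) :
    delta Z w = (visited α q₀ w).ncard := by
  have hfirst := fun v => not_exists_mem_suffix_iff hZ.2.1 hstar hα (v := v)
  have hbij : Set.BijOn (fun v => α v q₀) {v | v <+: w ∧ ¬ ∃ s ∈ Z, s <:+ v}
      (visited α q₀ w) := by
    refine ⟨fun v hv => ⟨v, hv.1, rfl⟩, ?_, ?_⟩
    · rintro v₁ ⟨hv₁, hf₁⟩ v₂ ⟨hv₂, hf₂⟩ heq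
      by_contra hne
      rcases prefix_or_prefix_of_prefix hv₁ hv₂ with h | h
      · exact (hfirst v₂).1 hf₂ v₁ h hne heq
      · exact (hfirst v₁).1 hf₁ v₂ h (Ne.symm hne) heq.symm
    · rintro - ⟨v, hv, rfl⟩
      set S := {x | x <+: w ∧ α x q₀ = α v q₀}
      set v₀ := Function.argminOn length S ⟨v, hv, rfl⟩
      obtain ⟨hv₀, hv₀q⟩ : v₀ ∈ S := Function.argminOn_mem _ _ _
      refine ⟨v₀, ⟨hv₀, (hfirst v₀).2 fun x hx hne heq => ?_⟩, hv₀q⟩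
      have hlt : x.length < v₀.length :=
        lt_of_le_of_ne hx.length_le fun h => hne (hx.eq_of_length h)
      exact hlt.not_ge (Function.argminOn_le length S ⟨hx.trans hv₀, heq.trans hv₀q⟩)
  rw [delta_eq_ncard hZ.2.1 hZ.2.2, ← hbij.image_eq, hbij.injOn.ncard_image]

end Visited

section ExtensionGraph

variable {A : Type*} {F : Set (List A)}

theorem exists_of_extGraph_adj {w : List A} {x y : {x // ExtVertex F w x}}
    (h : (extGraph F w).Adj x y) :
    ∃ a b, a :: (w ++ [b]) ∈ F ∧
      (x.1 = .inl a ∧ y.1 = .inr b ∨ x.1 = .inr b ∧ y.1 = .inl a) := by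
  rcases x with ⟨a | b, hx⟩ <;> rcases y with ⟨a' | b', hy⟩ <;>
    simp_all [extGraph, ExtRel]

theorem _root_.SimpleGraph.Preconnected.eq_of_forall_adj {V β : Type*} {G : SimpleGraph V}
    (hG : G.Preconnected) {f : V → β} (hf : ∀ x y, G.Adj x y → f x = f y) (x y : V) :
    f x = f y := by
  obtain ⟨p⟩ := hG x y
  induction p with
  | nil => rfl
  | cons h _ ih => exact (hf _ _ h).trans ih

theorem exists_cons_append_mem (hC : ConnectedSet F) {w : List A} {a b : A}
    (ha : a :: w ∈ F) (hb : w ++ [b] ∈ F) (hw : w ∈ F) : ∃ c, c :: (w ++ [b]) ∈ F := by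
  have : Nontrivial {x // ExtVertex F w x} :=
    ⟨⟨⟨.inr b, hb⟩, ⟨.inl a, ha⟩, fun h => Sum.inr_ne_inl (congrArg Subtype.val h)⟩⟩
  obtain ⟨y, hy⟩ := (hC w hw).preconnected.exists_adj_of_nontrivial ⟨.inr b, hb⟩
  obtain ⟨c, b', hc, ⟨h, -⟩ | ⟨h, -⟩⟩ := exists_of_extGraph_adj hy
  · simp at h
  · obtain rfl : b = b' := by simpa using h
    exact ⟨c, hc⟩

end ExtensionGraph

section Skew

variable {A Q : Type*} {F : Set (List A)} {α : List A → Equiv.Perm Q}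

/-- A step in the skew product of the Rauzy graph of `F` with `Q`: the window `x.1` slides one
letter `b` to the right. The inverse makes reading a word `s` act by `(α s)⁻¹`. -/
def SkewStep (F : Set (List A)) (α : List A → Equiv.Perm Q) (x y : List A × Q) : Prop :=
  ∃ b, x.1 ++ [b] ∈ F ∧ y = ((x.1 ++ [b]).tail, (α [b])⁻¹ x.2)

theorem skewReach_fst_mem (hF : Factorial F) {x y : List A × Q}
    (h : ReflTransGen (SkewStep F α) x y) (hx : x.1 ∈ F) :
    y.1 ∈ F ∧ y.1.length = x.1.length := by
  induction h with
  | refl => exact ⟨hx, rfl⟩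
  | tail _ hstep ih =>
    obtain ⟨b, hb, rfl⟩ := hstep
    exact ⟨hF.mem_of_suffix (tail_suffix _) hb, by simp [ih.2]⟩

theorem skewReach_append (hF : Factorial F) (hα : ∀ u v, α (u ++ v) = α u * α v)
    (x s : List A) (p : Q) (h : x ++ s ∈ F) :
    ReflTransGen (SkewStep F α) (x, p) ((x ++ s).drop s.length, (α s)⁻¹ p) := by
  induction s using reverseRecOn with
  | nil => simpa [map_nil_eq_one hα] using ReflTransGen.refl
  | append_singleton s b ih =>
    rw [← append_assoc] at h
    have hwin : (x ++ s).drop s.length ++ [b] = (x ++ s ++ [b]).drop s.length :=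
      (drop_append_of_le_length (by simp)).symm
    refine (ih (hF.mem_of_prefix (prefix_append _ _) h)).tail ⟨b, ?_, ?_⟩
    · exact hF.mem_of_suffix (hwin ▸ drop_suffix _ _) h
    · simp only [hwin, tail_drop, hα, mul_inv_rev, Equiv.Perm.mul_apply, append_assoc,
        length_append, length_singleton]

theorem skewReach_of_append_append_mem (hF : Factorial F)
    (hα : ∀ u v, α (u ++ v) = α u * α v) {z t z' : List A} (h : z ++ t ++ z' ∈ F)
    (hl : z.length = z'.length) (p : Q) :
    ReflTransGen (SkewStep F α) (z, p) (z', (α (t ++ z'))⁻¹ p) := by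
  rw [append_assoc] at h
  convert skewReach_append hF hα z (t ++ z') p h using 2
  rw [← append_assoc, drop_append_of_le_length (by simp only [length_append]; omega),
    drop_eq_nil_of_le (by simp only [length_append]; omega), nil_append]

theorem skewReach_nil (hA : AlphabetIs F) (hα : ∀ u v, α (u ++ v) = α u * α v) (s : List A)
    (p : Q) : ReflTransGen (SkewStep F α) ([], p) ([], (α s)⁻¹ p) := by
  induction s using reverseRecOn with
  | nil => simpa [map_nil_eq_one hα] using ReflTransGen.refl
  | append_singleton s b ih =>
    refine ih.tail ⟨b, by simpa using hA b, ?_⟩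
    simp [hα, mul_inv_rev, Equiv.Perm.mul_apply]

def skewFiber (F : Set (List A)) (α : List A → Equiv.Perm Q) (c : List A × Q) (z : List A) :
    Set Q :=
  {r | ReflTransGen (SkewStep F α) c (z, r)}

section Fibers

variable [Finite Q] (hF : Recurrent F) (hα : ∀ u v, α (u ++ v) = α u * α v)
include hF hα

theorem ncard_skewFiber_le (c : List A × Q) {z z' : List A} (hz : z ∈ F) (hz' : z' ∈ F)
    (hl : z.length = z'.length) : (skewFiber F α c z).ncard ≤ (skewFiber F α c z').ncard := by
  obtain ⟨t, ht⟩ := hF.2.2.2 z hz z' hz'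
  have hmaps : ⇑(α (t ++ z'))⁻¹ '' skewFiber F α c z ⊆ skewFiber F α c z' := by
    rintro - ⟨r, hr, rfl⟩
    exact hr.trans (skewReach_of_append_append_mem hF.1 hα ht hl r)
  calc (skewFiber F α c z).ncard = (⇑(α (t ++ z'))⁻¹ '' skewFiber F α c z).ncard :=
        (Set.ncard_image_of_injective _ (Equiv.injective _)).symm
    _ ≤ _ := Set.ncard_le_ncard hmaps

/-- Equality holds because all fibers of `c` at a given level have the same size. -/
theorem image_skewFiber_eq (c : List A × Q) {z : List A} {b : A} (hzb : z ++ [b] ∈ F) :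
    ⇑(α [b])⁻¹ '' skewFiber F α c z = skewFiber F α c (z ++ [b]).tail := by
  have hz : z ∈ F := hF.1.mem_of_prefix (prefix_append _ _) hzb
  refine Set.eq_of_subset_of_ncard_le ?_ ?_ (Set.toFinite _)
  · rintro - ⟨r, hr, rfl⟩
    exact hr.tail ⟨b, hzb, rfl⟩
  · rw [Set.ncard_image_of_injective _ (Equiv.injective _)]
    exact ncard_skewFiber_le hF hα c (hF.1.mem_of_suffix (tail_suffix _) hzb) hz (by simp)

theorem skewFiber_cons_eq (hC : ConnectedSet F) (c : List A × Q) {w : List A} {a a' : A}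
    (ha : a :: w ∈ F) (ha' : a' :: w ∈ F) :
    skewFiber F α c (a :: w) = skewFiber F α c (a' :: w) := by
  have hw : w ∈ F := hF.1.mem_of_suffix (suffix_cons a w) ha
  have hedge : ∀ a b, a :: (w ++ [b]) ∈ F →
      skewFiber F α c (a :: w) = α [b] '' skewFiber F α c (w ++ [b]) := by
    intro a b hab
    have h := image_skewFiber_eq hF hα c (z := a :: w) hab
    rw [cons_append, tail_cons] at h
    rw [← h, Set.image_image]
    simp
  let f : {x // ExtVertex F w x} → Set Q :=
    fun x => x.1.elim (fun a => skewFiber F α c (a :: w))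
      (fun b => α [b] '' skewFiber F α c (w ++ [b]))
  refine (hC w hw).preconnected.eq_of_forall_adj (f := f) (fun x y hxy => ?_)
    ⟨.inl a, ha⟩ ⟨.inl a', ha'⟩
  obtain ⟨a, b, hab, ⟨hx, hy⟩ | ⟨hx, hy⟩⟩ := exists_of_extGraph_adj hxy
  · simp only [f, hx, hy, Sum.elim_inl, Sum.elim_inr, hedge a b hab]
  · simp only [f, hx, hy, Sum.elim_inl, Sum.elim_inr, hedge a b hab]

/-- Paths at level `m` lift to level `m + 1`, up to the choice of left extensions. -/
theorem skewReach_lift (hC : ConnectedSet F) (c : List A × Q) {x y : List A × Q}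
    (h : ReflTransGen (SkewStep F α) x y) {a : A} (ha : a :: x.1 ∈ F)
    (hx : x.2 ∈ skewFiber F α c (a :: x.1)) :
    ∃ d, d :: y.1 ∈ F ∧ y.2 ∈ skewFiber F α c (d :: y.1) := by
  induction h with
  | refl => exact ⟨a, ha, hx⟩
  | @tail z _ _ hstep ih =>
    obtain ⟨d, hd, hdz⟩ := ih
    obtain ⟨b, hb, rfl⟩ := hstep
    obtain ⟨e, he⟩ := exists_cons_append_mem hC hd hb (hF.1.mem_of_suffix (suffix_cons d _) hd)
    have hez : z.2 ∈ skewFiber F α c (e :: z.1) := by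
      rwa [skewFiber_cons_eq hF hα hC c hd (hF.1.mem_of_prefix (prefix_append _ [b]) he)] at hdz
    refine ⟨(_ ++ [b]).head (by simp), by rwa [cons_head_tail], ?_⟩
    rw [cons_head_tail]
    exact hez.tail ⟨b, by simpa using he, by simp⟩

/-- At level `m + 1`, a level-`m` path between the tails lifts, and the fibers do not depend on the
left extension. -/
theorem skewReach_of_length_eq (hC : ConnectedSet F) (hA : AlphabetIs F)
    (htr : ∀ q q' : Q, ∃ w, α w q = q') (m : ℕ) {x y : List A} (hx : x ∈ F) (hy : y ∈ F)
    (hxl : x.length = m) (hyl : y.length = m) (p q : Q) :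
    ReflTransGen (SkewStep F α) (x, p) (y, q) := by
  induction m generalizing x y p q with
  | zero =>
    obtain rfl := length_eq_zero_iff.1 hxl
    obtain rfl := length_eq_zero_iff.1 hyl
    obtain ⟨t, rfl⟩ := htr q p
    simpa using skewReach_nil hA hα t (α t q)
  | succ m ih =>
    obtain ⟨d, x', rfl⟩ := exists_cons_of_length_eq_add_one hxl
    obtain ⟨e, y', rfl⟩ := exists_cons_of_length_eq_add_one hyl
    have hx' := hF.1.mem_of_suffix (suffix_cons d x') hx
    have hy' := hF.1.mem_of_suffix (suffix_cons e y') hy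
    obtain ⟨d', hd', hq⟩ := skewReach_lift hF hα hC (d :: x', p)
      (ih hx' hy' (by simpa using hxl) (by simpa using hyl) p q) hx ReflTransGen.refl
    rwa [skewFiber_cons_eq hF hα hC _ hd' hy] at hq

end Fibers

end Skew

section Followers

variable {A Q : Type*} {F : Set (List A)} {α : List A → Equiv.Perm Q} {q₀ : Q}

def followers (F : Set (List A)) (α : List A → Equiv.Perm Q) (q₀ : Q) (w : List A) : Set Q :=
  {p | ∃ y, w ++ y ∈ F ∧ α y q₀ = p}

theorem followers_append_subset (hF : Factorial F) (x w : List A) :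
    followers F α q₀ (x ++ w) ⊆ followers F α q₀ w := by
  rintro - ⟨y, hy, rfl⟩
  exact ⟨y, hF.mem_of_suffix ⟨x, by simp⟩ hy, rfl⟩

theorem image_followers_append_subset (hα : ∀ u v, α (u ++ v) = α u * α v) (w y : List A) :
    α y '' followers F α q₀ (w ++ y) ⊆ followers F α q₀ w := by
  rintro - ⟨-, ⟨z, hz, rfl⟩, rfl⟩
  exact ⟨y ++ z, by simpa using hz, by rw [hα, Equiv.Perm.mul_apply]⟩

variable [Finite Q]

theorem ncard_followers_le (hF : Factorial F) (hα : ∀ u v, α (u ++ v) = α u * α v)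
    {u w : List A} (h : u <:+: w) :
    (followers F α q₀ w).ncard ≤ (followers F α q₀ u).ncard := by
  obtain ⟨x, y, rfl⟩ := h
  calc (followers F α q₀ (x ++ u ++ y)).ncard ≤ (followers F α q₀ (u ++ y)).ncard :=
        Set.ncard_le_ncard (by simpa using followers_append_subset hF x (u ++ y))
    _ = (α y '' followers F α q₀ (u ++ y)).ncard :=
        (Set.ncard_image_of_injective _ (Equiv.injective _)).symm
    _ ≤ _ := Set.ncard_le_ncard (image_followers_append_subset hα u y)

/-- Minimality of `w` makes `α [b]` a bijection from the followers of `w ++ [b]` onto those of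
`w`. -/
theorem followers_step (hF : Factorial F) (hα : ∀ u v, α (u ++ v) = α u * α v) {w : List A}
    (hmin : ∀ w' ∈ F, (followers F α q₀ w).ncard ≤ (followers F α q₀ w').ncard) {b : A}
    (hb : w ++ [b] ∈ F) {p : Q} (hp : p ∈ followers F α q₀ w) :
    (α [b])⁻¹ p ∈ followers F α q₀ (w ++ [b]).tail := by
  have himage : α [b] '' followers F α q₀ (w ++ [b]) = followers F α q₀ w := by
    refine Set.eq_of_subset_of_ncard_le (image_followers_append_subset hα w [b]) ?_
      (Set.toFinite _)
    rw [Set.ncard_image_of_injective _ (Equiv.injective _)]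
    exact hmin _ hb
  obtain ⟨p', hp', rfl⟩ := himage ▸ hp
  rw [Equiv.Perm.coe_inv, Equiv.symm_apply_apply]
  rw [← cons_head_tail (append_ne_nil_of_right_ne_nil w (cons_ne_nil b []))] at hp'
  exact followers_append_subset hF [_] _ hp'

theorem mem_followers_of_skewReach (hF : Factorial F) (hα : ∀ u v, α (u ++ v) = α u * α v)
    {m : ℕ} (hmin : ∀ w ∈ F, w.length = m →
      ∀ w' ∈ F, (followers F α q₀ w).ncard ≤ (followers F α q₀ w').ncard)
    {x y : List A × Q} (h : ReflTransGen (SkewStep F α) x y) (hx : x.1 ∈ F)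
    (hxl : x.1.length = m) (hp : x.2 ∈ followers F α q₀ x.1) :
    y.2 ∈ followers F α q₀ y.1 := by
  induction h with
  | refl => exact hp
  | @tail z _ hxz hstep ih =>
    obtain ⟨hz, hzl⟩ := skewReach_fst_mem hF hxz hx
    obtain ⟨b, hb, rfl⟩ := hstep
    exact followers_step hF hα (hmin z.1 hz (hzl.trans hxl)) hb ih

/-- All words of length `n` contain `u`, which has the fewest followers, so they have the fewest
followers too; along the strongly connected skew product of level `n`, followers then propagate
from `q₀` to every state. -/
theorem followers_eq_univ (hF : UniformlyRecurrent F) (hC : ConnectedSet F) (hA : AlphabetIs F)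
    (hα : ∀ u v, α (u ++ v) = α u * α v) (htr : ∀ q q' : Q, ∃ w, α w q = q') {w : List A}
    (hw : w ∈ F) : followers F α q₀ w = Set.univ := by
  set card := fun v => (followers F α q₀ v).ncard
  set u := Function.argminOn card F hF.1.2.1
  have hu : u ∈ F := Function.argminOn_mem _ _ _
  have humin : ∀ v ∈ F, card u ≤ card v := fun v hv => Function.argminOn_le _ _ hv
  obtain ⟨n, hn⟩ := hF.2 u hu
  have hmin : ∀ v ∈ F, v.length = n → ∀ v' ∈ F, card v ≤ card v' :=
    fun v hv hvl v' hv' => (ncard_followers_le hF.1.1 hα (hn v hv hvl.ge)).trans (humin v' hv')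
  obtain ⟨x, hx, hxl⟩ := hF.1.exists_length_eq n
  have hx_univ : followers F α q₀ x = Set.univ := Set.eq_univ_of_forall fun q =>
    mem_followers_of_skewReach hF.1.1 hα hmin
      (skewReach_of_length_eq hF.1 hα hC hA htr n hx hx hxl hxl q₀ q) hx hxl
      ⟨[], by simpa using hx, by simp [map_nil_eq_one hα]⟩
  refine Set.eq_of_subset_of_ncard_le (Set.subset_univ _) ?_ (Set.toFinite _)
  calc Set.univ.ncard = card x := by simp only [card, hx_univ]
    _ ≤ card u := ncard_followers_le hF.1.1 hα (hn x hx hxl.ge)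
    _ ≤ card w := humin w hw

theorem exists_mem_visited_eq_univ (hF : UniformlyRecurrent F) (hC : ConnectedSet F)
    (hA : AlphabetIs F) (hα : ∀ u v, α (u ++ v) = α u * α v)
    (htr : ∀ q q' : Q, ∃ w, α w q = q') : ∃ w ∈ F, visited α q₀ w = Set.univ := by
  classical
  have := Fintype.ofFinite Q
  suffices h : ∀ S : Finset Q, ∃ w ∈ F, ↑S ⊆ visited α q₀ w by
    obtain ⟨w, hw, hS⟩ := h Finset.univ
    exact ⟨w, hw, by simpa using hS⟩
  intro S
  induction S using Finset.induction_on with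
  | empty => exact ⟨[], hF.1.1.nil_mem hF.1.2.1, by simp⟩
  | insert q S _ ih =>
    obtain ⟨w, hw, hS⟩ := ih
    obtain ⟨y, hy, hyq⟩ : (α w)⁻¹ q ∈ followers F α q₀ w :=
      followers_eq_univ hF hC hA hα htr hw ▸ Set.mem_univ _
    refine ⟨w ++ y, hy, ?_⟩
    rw [Finset.coe_insert, Set.insert_subset_iff]
    refine ⟨⟨w ++ y, prefix_rfl, by simp [hα, hyq]⟩, hS.trans ?_⟩
    exact Set.image_mono fun v hv => hv.trans (prefix_append w y)

end Followers

end PaperDefs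

open PaperDefs in
theorem stmt_11_general {A : Type}
    (Z F : Set (List A)) (hZ : IsGroupCode Z)
    (hF : UniformlyRecurrent F) (hTree : TreeSet F) (hAlph : AlphabetIs F) :
    Fdeg (Z ∩ F) F = deg Z := by
  obtain ⟨hZpre, Q, _, q₀, α, -, hα, htr, hstar, -⟩ := hZ
  have hδ : ∀ w, delta Z w = (visited α q₀ w).ncard := delta_eq_ncard_visited hZpre hstar hα
  have hle : ∀ w, delta Z w ≤ Nat.card Q := fun w => by
    rw [hδ, ← Set.ncard_univ]
    exact Set.ncard_le_ncard (Set.subset_univ _)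
  obtain ⟨w, hwF, hw⟩ := exists_mem_visited_eq_univ (q₀ := q₀) hF
    (fun w hw => (hTree w hw).connected) hAlph hα htr
  have hwQ : delta Z w = Nat.card Q := by rw [hδ, hw, Set.ncard_univ]
  rw [Fdeg_inter_self hF.1.1, deg, Fdeg_eq_of_forall_le (fun w _ => hle w) ⟨w, hwF, hwQ⟩,
    Fdeg_eq_of_forall_le (fun w _ => hle w) ⟨w, Set.mem_univ w, hwQ⟩]

open PaperDefs in
theorem stmt_11 {A : Type} [Fintype A]
    (Z F : Set (List A)) (hZ : IsGroupCode Z)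
    (hF : UniformlyRecurrent F) (hTree : TreeSet F) (hAlph : AlphabetIs F) :
    Fdeg (Z ∩ F) F = deg Z :=
  stmt_11_general Z F hZ hF hTree hAlph
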